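/- Let G be a 3-connected graph with a tri-separation (C,D) such that both G[C\D] and G[D\C] are disconnected (i.e. (C,D) is not half-connected). If G has no totally-nested nontrivial tri-separation, then G is isomorphic to the complete bipartite graph K_{3,m} for some m ≥ 4. -/

import Mathlib

namespace Paper

open SimpleGraph

variable {V : Type*} [Fintype V] [DecidableEq V]

/-- A graph is `k`-connected if it has more than `k` vertices and deleting
fewer than `k` vertices never disconnects it. -/
def KConnected {W : Type*} (k : ℕ) (H : SimpleGraph W) : Prop :=
  k < Nat.card W ∧ ∀ S : Set W, S.ncard < k → (H.induce Sᶜ).Connected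

/-- A mixed-separation of `G`: `A ∪ B = V(G)` and both `A \ B` and `B \ A` are nonempty. -/
def MixedSep (G : SimpleGraph V) (A B : Set V) : Prop :=
  A ∪ B = Set.univ ∧ (A \ B).Nonempty ∧ (B \ A).Nonempty

/-- The edges of the separator of `(A,B)`: the edges between `A \ B` and `B \ A`. -/
def sepEdges (G : SimpleGraph V) (A B : Set V) : Set (Sym2 V) :=
  {e | e ∈ G.edgeSet ∧ ∃ x ∈ A \ B, ∃ y ∈ B \ A, e = s(x, y)}

/-- The separator of `(A,B)`: the vertices of `A ∩ B` together with the
edges between `A \ B` and `B \ A`, viewed as a set in `V ⊕ Sym2 V`. -/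
def sepSet (G : SimpleGraph V) (A B : Set V) : Set (V ⊕ Sym2 V) :=
  (Sum.inl '' (A ∩ B)) ∪ (Sum.inr '' sepEdges G A B)

/-- The order of a mixed-separation: the size of its separator. -/
noncomputable def sepOrder (G : SimpleGraph V) (A B : Set V) : ℕ :=
  (sepSet G A B).ncard

/-- A mixed `k`-separation. -/
def MixedKSep (G : SimpleGraph V) (k : ℕ) (A B : Set V) : Prop :=
  MixedSep G A B ∧ sepOrder G A B = k

/-- A tri-separation: a mixed 3-separation such that every vertex of `A ∩ B`
has at least two neighbours in both `G[A]` and `G[B]`. -/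
def TriSep (G : SimpleGraph V) (A B : Set V) : Prop :=
  MixedKSep G 3 A B ∧
    ∀ v ∈ A ∩ B, 2 ≤ (G.neighborSet v ∩ A).ncard ∧ 2 ≤ (G.neighborSet v ∩ B).ncard

/-- Two mixed-separations are nested if, after possibly swapping the names of
the sides of either one, `A ⊆ C` and `B ⊇ D`. -/
def Nested (A B C D : Set V) : Prop :=
  (A ⊆ C ∧ D ⊆ B) ∨ (A ⊆ D ∧ C ⊆ B) ∨ (B ⊆ C ∧ D ⊆ A) ∨ (B ⊆ D ∧ C ⊆ A)

/-- The induced subgraph `G[A]` contains a cycle. -/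
def HasCycleIn (G : SimpleGraph V) (A : Set V) : Prop :=
  ∃ (u : V) (p : G.Walk u u), p.IsCycle ∧ ∀ x ∈ p.support, x ∈ A

/-- A mixed 3-separation is nontrivial if both sides induce a subgraph containing a cycle. -/
def NontrivialSep (G : SimpleGraph V) (A B : Set V) : Prop :=
  HasCycleIn G A ∧ HasCycleIn G B

/-- A mixed-separation is strong if every vertex in its separator has degree at least 4. -/
def StrongSep (G : SimpleGraph V) (A B : Set V) : Prop :=
  ∀ v ∈ A ∩ B, 4 ≤ (G.neighborSet v).ncard

/-- A tri-separation is totally nested if it is nested with every tri-separation of `G`. -/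
def TotallyNested (G : SimpleGraph V) (A B : Set V) : Prop :=
  ∀ C D : Set V, TriSep G C D → Nested A B C D

/-- A trivial tri-separation: its sides are the sides `{v}` and `V \ {v}` of an
atomic cut at a degree-3 vertex `v`. -/
def TrivialSep (G : SimpleGraph V) (A B : Set V) : Prop :=
  ∃ v : V, (G.neighborSet v).ncard = 3 ∧
    ((A = {v} ∧ B = {v}ᶜ) ∨ (B = {v} ∧ A = {v}ᶜ))

/-- Diagonal edges of the crossing-diagram of `(A,B)` and `(C,D)`:
edges whose endvertices lie in opposite corners. -/
def diagEdges (G : SimpleGraph V) (A B C D : Set V) : Set (Sym2 V) :=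
  {e | e ∈ G.edgeSet ∧ ∃ x y, e = s(x, y) ∧
    ((x ∈ (A \ B) ∩ (C \ D) ∧ y ∈ (B \ A) ∩ (D \ C)) ∨
     (x ∈ (A \ B) ∩ (D \ C) ∧ y ∈ (B \ A) ∩ (C \ D)))}

/-- The centre of the crossing-diagram: `A ∩ B ∩ C ∩ D` together with the diagonal edges. -/
def centre (G : SimpleGraph V) (A B C D : Set V) : Set (V ⊕ Sym2 V) :=
  (Sum.inl '' (A ∩ B ∩ C ∩ D)) ∪ (Sum.inr '' diagEdges G A B C D)

/-- The link for the side `C` in the crossing-diagram of `(A,B)` and `(C,D)`: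
the vertices `(A ∩ B) \ D` together with the non-diagonal edges of the separator
of `(A,B)` having an endvertex in a corner for `C`. -/
def link (G : SimpleGraph V) (A B C D : Set V) : Set (V ⊕ Sym2 V) :=
  (Sum.inl '' ((A ∩ B) \ D)) ∪
    (Sum.inr '' {e | e ∈ sepEdges G A B ∧ e ∉ diagEdges G A B C D ∧ ∃ x ∈ e, x ∈ C \ D})

/-- The corner-separator at the corner for `{A,C}`: the union of the links for `A`
and for `C` together with the centre, minus the diagonal edges without an
endvertex in the corner for `{A,C}`. -/
def cornerSep (G : SimpleGraph V) (A B C D : Set V) : Set (V ⊕ Sym2 V) :=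
  link G C D A B ∪ link G A B C D ∪ (Sum.inl '' (A ∩ B ∩ C ∩ D)) ∪
    (Sum.inr '' {e | e ∈ diagEdges G A B C D ∧ ∃ x ∈ e, x ∈ (A \ B) ∩ (C \ D)})

/-- Jumping edges: edges joining vertices of two opposite links. -/
def jumpEdges (G : SimpleGraph V) (A B C D : Set V) : Set (Sym2 V) :=
  {e | e ∈ G.edgeSet ∧ ∃ x y, e = s(x, y) ∧
    ((x ∈ (A ∩ B) \ D ∧ y ∈ (A ∩ B) \ C) ∨ (x ∈ (C ∩ D) \ B ∧ y ∈ (C ∩ D) \ A))}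

/-- A 2-separation: a separation of order two with no edges in its separator. -/
def TwoSep (G : SimpleGraph V) (A B : Set V) : Prop :=
  A ∪ B = Set.univ ∧ (A \ B).Nonempty ∧ (B \ A).Nonempty ∧
    (A ∩ B).ncard = 2 ∧ sepEdges G A B = ∅

/-- `K` is (the vertex set of) a connected component of `G - S`. -/
def IsCompOf (G : SimpleGraph V) (S K : Set V) : Prop :=
  ∃ c : (G.induce Sᶜ).ConnectedComponent, K = Subtype.val '' c.supp

end Paper

/-!
Because `G` is 3-connected and `G[C \ D]` is disconnected, the separator of `(C, D)` contains no
edge: otherwise some component of `G[C \ D]` would be cut off by fewer than three vertices. So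
`X = C ∩ D` is a 3-vertex cut, and `G - X` has at least four components, each adjacent to every
vertex of `X`. A tri-separation with vertices of `X` strictly on both sides would then need a
separate separator element for each of these components; hence `X` lies in one side of every
tri-separation.

For a component `K` of `G - X` let `S ⊆ X` be the largest set whose vertices each have two
neighbours in `K ∪ S`. Then `(K ∪ S, Kᶜ)` is a totally nested tri-separation and `Kᶜ` contains a
cycle, so by assumption `K ∪ S` is acyclic. This forces `S = ∅`, `K` to be a single vertex, and
`X` to be independent; by 3-connectivity every vertex outside `X` is adjacent to exactly the three
vertices of `X`, and `G ≅ K_{3,m}` with `m ≥ 4` the number of components.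
-/

namespace Paper

open SimpleGraph

variable {V : Type*}

-- Reflexive also at vertices outside `T`.
def ReachIn (G : SimpleGraph V) (T : Set V) : V → V → Prop :=
  Relation.ReflTransGen fun a b => G.Adj a b ∧ a ∈ T ∧ b ∈ T

namespace ReachIn

variable {G : SimpleGraph V} {T : Set V} {u v w : V}

lemma refl (u : V) : ReachIn G T u u := Relation.ReflTransGen.refl

lemma symm (h : ReachIn G T u v) : ReachIn G T v u :=
  (@Relation.ReflTransGen.stdSymm _ _ ⟨fun _ _ ⟨hab, ha, hb⟩ => ⟨hab.symm, hb, ha⟩⟩).symm _ _ h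

lemma trans (h : ReachIn G T u v) (h' : ReachIn G T v w) : ReachIn G T u w :=
  Relation.ReflTransGen.trans h h'

lemma tail (h : ReachIn G T u v) (hvw : G.Adj v w) (hv : v ∈ T) (hw : w ∈ T) :
    ReachIn G T u w :=
  Relation.ReflTransGen.tail h ⟨hvw, hv, hw⟩

lemma mem_of_closed {W : Set V} (h : ReachIn G T u w) (hu : u ∈ W)
    (hW : ∀ a ∈ W, ∀ b, G.Adj a b → b ∈ T → b ∈ W) : w ∈ W := by
  induction h with
  | refl => exact hu
  | tail _ hbc ih => exact hW _ ih _ hbc.1 hbc.2.2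

lemma mem (h : ReachIn G T u w) (hu : u ∈ T) : w ∈ T :=
  h.mem_of_closed hu fun _ _ _ _ hb => hb

lemma restrict {P : Set V} (h : ReachIn G T u w) (hP : ∀ s, ReachIn G T u s → s ∈ P) :
    ReachIn G P u w := by
  induction h with
  | refl => exact refl u
  | @tail b c hub hbc ih =>
      exact ReachIn.tail ih hbc.1 (hP b hub) (hP c (ReachIn.tail hub hbc.1 hbc.2.1 hbc.2.2))

lemma exists_walk (h : ReachIn G T u w) :
    ∃ p : G.Walk u w, ∀ s ∈ p.support, ReachIn G T u s := by
  induction h with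
  | refl => exact ⟨Walk.nil, by simpa using refl u⟩
  | @tail b c hub hbc ih =>
      obtain ⟨p, hp⟩ := ih
      refine ⟨p.concat hbc.1, fun s hs => ?_⟩
      rw [Walk.support_concat, List.mem_append, List.mem_singleton] at hs
      rcases hs with hs | rfl
      · exact hp s hs
      · exact ReachIn.tail hub hbc.1 hbc.2.1 hbc.2.2

end ReachIn

lemma reachIn_of_connected {G : SimpleGraph V} {T : Set V} (h : (G.induce T).Connected)
    {u v : V} (hu : u ∈ T) (hv : v ∈ T) : ReachIn G T u v := by
  obtain ⟨p⟩ := h.preconnected ⟨u, hu⟩ ⟨v, hv⟩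
  suffices ∀ (a b : T), (G.induce T).Walk a b → ReachIn G T a b from this _ _ p
  intro a b q
  induction q with
  | nil => exact ReachIn.refl _
  | @cons x y z hxy _ ih => exact Relation.ReflTransGen.head ⟨by simpa using hxy, x.2, y.2⟩ ih

lemma exists_not_reachIn_of_not_connected {G : SimpleGraph V} {T : Set V} (hT : T.Nonempty)
    (h : ¬ (G.induce T).Connected) : ∃ a ∈ T, ∃ b ∈ T, ¬ ReachIn G T a b := by
  by_contra! hall
  refine h ((connected_iff _).2 ⟨fun ⟨a, ha⟩ ⟨b, hb⟩ => ?_, ⟨⟨hT.choose, hT.choose_spec⟩⟩⟩)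
  have key : ∀ w, ReachIn G T a w → ∀ hw : w ∈ T, (G.induce T).Reachable ⟨a, ha⟩ ⟨w, hw⟩ := by
    intro w hw
    induction hw with
    | refl => exact fun _ => Reachable.refl _
    | tail _ hbc ih => exact fun _ => (ih hbc.2.1).trans (Adj.reachable (by simpa using hbc.1))
  exact key b (hall a ha b hb) hb

def component (G : SimpleGraph V) (X : Set V) (v : V) : Set V := {w | ReachIn G Xᶜ v w}

section component

variable {G : SimpleGraph V} {X : Set V} {u v w : V}

lemma mem_component_self (G : SimpleGraph V) (X : Set V) (v : V) : v ∈ component G X v :=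
  ReachIn.refl v

lemma notMem_of_mem_component (hv : v ∉ X) (hw : w ∈ component G X v) : w ∉ X :=
  ReachIn.mem hw hv

lemma component_eq_of_mem (hw : w ∈ component G X v) : component G X v = component G X w := by
  ext z
  exact ⟨fun hz => ReachIn.trans (ReachIn.symm hw) hz, fun hz => ReachIn.trans hw hz⟩

lemma component_eq_of_mem_of_mem (hu : w ∈ component G X u) (hv : w ∈ component G X v) :
    component G X u = component G X v := by
  rw [component_eq_of_mem hu, component_eq_of_mem hv]

lemma mem_component_of_adj (hv : v ∉ X) (hu : u ∈ component G X v) (huw : G.Adj u w)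
    (hw : w ∉ X) : w ∈ component G X v :=
  ReachIn.tail hu huw (notMem_of_mem_component hv hu) hw

end component

lemma neighborSet_subset_component_union {G : SimpleGraph V} {X : Set V} {v w : V} (hv : v ∉ X)
    (hw : w ∈ component G X v) : G.neighborSet w ⊆ component G X v ∪ X := fun _ hwz =>
  or_iff_not_imp_right.2 (mem_component_of_adj hv hw hwz)

lemma ncard_le_ncard_of_rel {α β : Type*} {s : Set α} {t : Set β} (ht : t.Finite)
    (r : α → β → Prop) (hs : ∀ a ∈ s, ∃ b ∈ t, r a b)
    (huniq : ∀ b ∈ t, ∀ a₁ ∈ s, ∀ a₂ ∈ s, r a₁ b → r a₂ b → a₁ = a₂) :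
    s.ncard ≤ t.ncard := by
  rcases isEmpty_or_nonempty β with hβ | hβ
  · rw [Set.eq_empty_of_forall_notMem fun a ha => isEmptyElim (hs a ha).choose]
    exact (Set.ncard_empty α).trans_le (Nat.zero_le _)
  choose! f hft hfr using hs
  exact Set.ncard_le_ncard_of_injOn f hft
    (fun a₁ h₁ a₂ h₂ he => huniq _ (hft a₁ h₁) a₁ h₁ a₂ h₂ (hfr a₁ h₁) (he ▸ hfr a₂ h₂)) ht

namespace KConnected

variable {G : SimpleGraph V} {k : ℕ}

lemma le_ncard_of_closed (hk : KConnected k G) {S W : Set V} {w z : V} (hw : w ∈ W)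
    (hwS : w ∉ S) (hz : z ∉ W) (hzS : z ∉ S) (hW : ∀ a ∈ W, ∀ b, G.Adj a b → b ∉ S → b ∈ W) :
    k ≤ S.ncard := by
  by_contra! hS
  exact hz ((reachIn_of_connected (hk.2 S hS) hwS hzS).mem_of_closed hw hW)

lemma le_ncard_neighborSet [Finite V] (hk : KConnected k G) (v : V) :
    k ≤ (G.neighborSet v).ncard := by
  by_contra! hlt
  have hcover : Set.univ ⊆ G.neighborSet v ∪ {v} := by
    intro z _
    by_contra hz
    simp only [Set.mem_union, Set.mem_singleton_iff, not_or] at hz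
    exact (hk.le_ncard_of_closed (W := {v}) rfl (fun h => G.irrefl h) hz.2 hz.1
      (by rintro a rfl b hab hb; exact absurd hab hb)).not_gt hlt
  have := hk.1
  rw [← Set.ncard_univ] at this
  have := (Set.ncard_le_ncard hcover).trans (Set.ncard_union_le _ _)
  rw [Set.ncard_singleton] at this
  omega

lemma exists_adj_mem_component [Finite V] (hk : KConnected k G) {X : Set V} (hX : X.ncard ≤ k)
    {x v : V} (hx : x ∈ X) (hv : v ∉ X) : ∃ u ∈ component G X v, G.Adj x u := by
  by_contra! hno
  have hxK : x ∉ component G X v := fun h => notMem_of_mem_component hv h hx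
  have := hk.le_ncard_of_closed (S := X \ {x}) (mem_component_self G X v)
    (fun h => hv h.1) hxK (fun h => h.2 rfl) fun a ha b hab hb => by
      by_cases hbx : b = x
      · exact absurd (hbx ▸ hab.symm) (hno a ha)
      · exact mem_component_of_adj hv ha hab fun hbX => hb ⟨hbX, hbx⟩
  rw [Set.ncard_sdiff_singleton_of_mem hx] at this
  have : 0 < X.ncard := (Set.ncard_pos).2 ⟨x, hx⟩
  omega

end KConnected

section separation

variable {G : SimpleGraph V} {A B C D : Set V}

lemma sepOrder_eq [Finite V] (G : SimpleGraph V) (A B : Set V) :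
    sepOrder G A B = (A ∩ B).ncard + (sepEdges G A B).ncard := by
  unfold sepOrder sepSet
  rw [Set.ncard_union_eq, Set.ncard_image_of_injective _ Sum.inl_injective,
    Set.ncard_image_of_injective _ Sum.inr_injective]
  rw [Set.disjoint_left]
  rintro _ ⟨a, -, rfl⟩ ⟨e, -, h⟩
  exact Sum.inl_ne_inr h.symm

lemma sepEdges_comm (G : SimpleGraph V) (A B : Set V) : sepEdges G B A = sepEdges G A B := by
  ext e
  constructor <;> rintro ⟨he, x, hx, y, hy, rfl⟩ <;> exact ⟨he, y, hy, x, hx, Sym2.eq_swap⟩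

lemma TriSep.symm (h : TriSep G A B) : TriSep G B A := by
  obtain ⟨⟨⟨hu, h1, h2⟩, hord⟩, hdeg⟩ := h
  refine ⟨⟨⟨by rwa [Set.union_comm], h2, h1⟩, ?_⟩, fun v hv => (hdeg v ?_).symm⟩
  · rwa [sepOrder, sepSet, Set.inter_comm, sepEdges_comm]
  · rwa [Set.inter_comm]

lemma nested_swap_right (h : Nested A B D C) : Nested A B C D := by
  unfold Nested at h ⊢
  tauto

lemma mem_diff_or_mem_inter_or_mem_diff (h : A ∪ B = Set.univ) (w : V) :
    w ∈ A \ B ∨ w ∈ A ∩ B ∨ w ∈ B \ A := by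
  have : w ∈ A ∪ B := h ▸ Set.mem_univ w
  by_cases hA : w ∈ A <;> by_cases hB : w ∈ B <;> simp [hA, hB] at this ⊢

def sepEdgesMeeting (G : SimpleGraph V) (A B W : Set V) : Set (Sym2 V) :=
  {e | e ∈ sepEdges G A B ∧ ∃ s ∈ e, s ∈ W}

lemma ncard_adj_across_le [Finite V] {W : Set V} (hW : W ⊆ A \ B) :
    {y | y ∈ B \ A ∧ ∃ x ∈ W, G.Adj x y}.ncard ≤ (sepEdgesMeeting G A B W).ncard := by
  refine ncard_le_ncard_of_rel (Set.toFinite _) (fun y e => y ∈ e) ?_ ?_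
  · rintro y ⟨hy, x, hx, hxy⟩
    exact ⟨s(x, y), ⟨⟨hxy, x, hW hx, y, hy, rfl⟩, x, Sym2.mem_mk_left x y, hx⟩,
      Sym2.mem_mk_right x y⟩
  · rintro _ ⟨⟨-, a, ha, b, hb, rfl⟩, -⟩ y₁ ⟨hy₁, -⟩ y₂ ⟨hy₂, -⟩ h₁ h₂
    have side : ∀ y ∈ B \ A, y ∈ s(a, b) → y = b := fun y hy hye =>
      (Sym2.mem_iff.1 hye).resolve_left fun h => hy.2 (h ▸ ha.1)
    rw [side y₁ hy₁ h₁, side y₂ hy₂ h₂]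

lemma KConnected.le_ncard_inter_add_ncard_sepEdgesMeeting [Finite V] {k : ℕ}
    (hk : KConnected k G) (hCD : C ∪ D = Set.univ) {a b : V} (ha : a ∈ C \ D)
    (hab : ¬ ReachIn G (C \ D) a b) (hb : b ∈ C \ D) :
    k ≤ (C ∩ D).ncard + (sepEdgesMeeting G C D {w | ReachIn G (C \ D) a w}).ncard := by
  set L := {w | ReachIn G (C \ D) a w}
  have hL : L ⊆ C \ D := fun w hw => ReachIn.mem hw ha
  calc k ≤ (C ∩ D ∪ {y | y ∈ D \ C ∧ ∃ x ∈ L, G.Adj x y}).ncard := by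
        refine hk.le_ncard_of_closed (W := L) (ReachIn.refl a) ?_ hab ?_ ?_
        · rintro (h | h)
          exacts [ha.2 h.2, ha.2 h.1.1]
        · rintro (h | h)
          exacts [hb.2 h.2, hb.2 h.1.1]
        · intro x hx y hxy hy
          simp only [Set.mem_union, not_or] at hy
          rcases mem_diff_or_mem_inter_or_mem_diff hCD y with h | h | h
          · exact ReachIn.tail hx hxy (hL hx) h
          · exact absurd h hy.1
          · exact absurd ⟨h, x, hx, hxy⟩ hy.2
    _ ≤ _ := (Set.ncard_union_le _ _).trans (Nat.add_le_add_left (ncard_adj_across_le hL) _)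

lemma sepEdges_eq_empty_of_not_connected [Finite V] {k : ℕ} (hk : KConnected k G)
    (hCD : MixedSep G C D) (hord : sepOrder G C D ≤ k) (h : ¬ (G.induce (C \ D)).Connected) :
    sepEdges G C D = ∅ := by
  obtain ⟨a, ha, b, hb, hab⟩ := exists_not_reachIn_of_not_connected hCD.2.1 h
  set La := {w | ReachIn G (C \ D) a w}
  set Lb := {w | ReachIn G (C \ D) b w}
  have hdisj : Disjoint (sepEdgesMeeting G C D La) (sepEdgesMeeting G C D Lb) := by
    refine Set.disjoint_left.2 ?_
    rintro _ ⟨⟨-, x, hx, y, hy, rfl⟩, s, hse, hs⟩ ⟨-, t, hte, ht⟩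
    have endpoint : ∀ u ∈ C \ D, u ∈ s(x, y) → u = x := fun u hu hue =>
      (Sym2.mem_iff.1 hue).resolve_right fun h => hy.2 (h ▸ hu.1)
    rw [endpoint s (ReachIn.mem hs ha) hse] at hs
    rw [endpoint t (ReachIn.mem ht hb) hte] at ht
    exact hab (hs.trans ht.symm)
  have hsum := Set.ncard_union_eq hdisj
  have hsub : sepEdgesMeeting G C D La ∪ sepEdgesMeeting G C D Lb ⊆ sepEdges G C D :=
    Set.union_subset (fun _ he => he.1) fun _ he => he.1
  have h₁ : k ≤ (C ∩ D).ncard + (sepEdgesMeeting G C D La).ncard :=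
    hk.le_ncard_inter_add_ncard_sepEdgesMeeting hCD.1 ha hab hb
  have h₂ : k ≤ (C ∩ D).ncard + (sepEdgesMeeting G C D Lb).ncard :=
    hk.le_ncard_inter_add_ncard_sepEdgesMeeting hCD.1 hb (fun h => hab h.symm) ha
  have := Set.ncard_le_ncard hsub
  rw [sepOrder_eq] at hord
  exact (Set.ncard_eq_zero).1 (by omega)

end separation

def UnitMeets (G : SimpleGraph V) : V ⊕ Sym2 V → Set V → Prop
  | Sum.inl t, K => t ∈ K
  | Sum.inr e, K => e ∈ G.edgeSet ∧ ∃ s ∈ e, s ∈ K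

section units

variable {G : SimpleGraph V} {A B C D X : Set V} {u v : V}

lemma sepSet_comm (G : SimpleGraph V) (A B : Set V) : sepSet G B A = sepSet G A B := by
  rw [sepSet, sepSet, Set.inter_comm, sepEdges_comm]

lemma component_eq_of_unitMeets {μ : V ⊕ Sym2 V} (hu : u ∉ X) (hv : v ∉ X)
    (h₁ : UnitMeets G μ (component G X u)) (h₂ : UnitMeets G μ (component G X v)) :
    component G X u = component G X v := by
  cases μ with
  | inl t => exact component_eq_of_mem_of_mem h₁ h₂
  | inr e =>
      obtain ⟨he, s, hs, hsu⟩ := h₁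
      obtain ⟨-, t, ht, htv⟩ := h₂
      obtain rfl | hst := eq_or_ne s t
      · exact component_eq_of_mem_of_mem hsu htv
      · rw [(Sym2.mem_and_mem_iff hst).1 ⟨hs, ht⟩, mem_edgeSet] at he
        exact component_eq_of_mem_of_mem
          (mem_component_of_adj hu hsu he (notMem_of_mem_component hv htv)) htv

lemma component_subset_diff_of_mem (hAB : A ∪ B = Set.univ) (hv : v ∉ X) (hvA : v ∈ A \ B)
    (h : ∀ μ ∈ sepSet G A B, ¬ UnitMeets G μ (component G X v)) :
    component G X v ⊆ A \ B := by
  intro w hw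
  refine (ReachIn.mem_of_closed hw (W := component G X v ∩ (A \ B))
    ⟨mem_component_self G X v, hvA⟩ ?_).2
  rintro a ⟨ha, haA⟩ b hab hb
  have hbK := mem_component_of_adj hv ha hab hb
  refine ⟨hbK, ?_⟩
  rcases mem_diff_or_mem_inter_or_mem_diff hAB b with hbA | hbAB | hbB
  · exact hbA
  · exact absurd hbK (h _ (Or.inl ⟨b, hbAB, rfl⟩))
  · exact absurd ⟨hab, a, Sym2.mem_mk_left a b, ha⟩
      (h _ (Or.inr ⟨s(a, b), ⟨hab, a, haA, b, hbB, rfl⟩, rfl⟩))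

lemma component_subset_side (hAB : A ∪ B = Set.univ) (hv : v ∉ X)
    (h : ∀ μ ∈ sepSet G A B, ¬ UnitMeets G μ (component G X v)) :
    component G X v ⊆ A \ B ∨ component G X v ⊆ B \ A := by
  rcases mem_diff_or_mem_inter_or_mem_diff hAB v with hvA | hvAB | hvB
  · exact Or.inl (component_subset_diff_of_mem hAB hv hvA h)
  · exact absurd (mem_component_self G X v) (h _ (Or.inl ⟨v, hvAB, rfl⟩))
  · rw [← sepSet_comm] at h
    exact Or.inr (component_subset_diff_of_mem (Set.union_comm A B ▸ hAB) hv hvB h)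

lemma component_subset_diff_of_sepEdges_eq_empty (hAB : A ∪ B = Set.univ)
    (hE : sepEdges G A B = ∅) (hv : v ∈ A \ B) : component G (A ∩ B) v ⊆ A \ B := by
  refine component_subset_diff_of_mem hAB (fun h => hv.2 h.2) hv ?_
  rintro _ (⟨t, ht, rfl⟩ | ⟨e, he, rfl⟩)
  · exact fun htK => notMem_of_mem_component (fun h => hv.2 h.2) htK ht
  · exact absurd he (hE ▸ Set.notMem_empty e)

lemma two_le_ncard_image_component [Finite V] (hAB : A ∪ B = Set.univ)
    (hE : sepEdges G A B = ∅) (hne : (A \ B).Nonempty) (h : ¬ (G.induce (A \ B)).Connected) :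
    2 ≤ (component G (A ∩ B) '' (A \ B)).ncard := by
  obtain ⟨a, ha, b, hb, hab⟩ := exists_not_reachIn_of_not_connected hne h
  refine (Set.one_lt_ncard).2 ⟨_, Set.mem_image_of_mem _ ha, _, Set.mem_image_of_mem _ hb,
    fun heq => hab ?_⟩
  have hbK : b ∈ component G (A ∩ B) a := heq ▸ mem_component_self G _ b
  exact ReachIn.restrict hbK fun s hs => component_subset_diff_of_sepEdges_eq_empty hAB hE ha hs

end units

structure FourComponentCut (G : SimpleGraph V) (X : Set V) : Prop where
  kConnected : KConnected 3 G
  ncard_eq : X.ncard = 3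
  four_le : 4 ≤ (component G X '' Xᶜ).ncard

lemma FourComponentCut.of_triSep [Finite V] {G : SimpleGraph V} {C D : Set V}
    (h3 : KConnected 3 G) (hCD : TriSep G C D) (h1 : ¬ (G.induce (C \ D)).Connected)
    (h2 : ¬ (G.induce (D \ C)).Connected) : FourComponentCut G (C ∩ D) := by
  obtain ⟨⟨hsep, hord⟩, -⟩ := hCD
  have hE := sepEdges_eq_empty_of_not_connected h3 hsep hord.le h1
  have hCD := two_le_ncard_image_component hsep.1 hE hsep.2.1 h1
  have hDC := two_le_ncard_image_component (Set.union_comm C D ▸ hsep.1)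
    (sepEdges_comm G C D ▸ hE) hsep.2.2 h2
  rw [Set.inter_comm D C] at hDC
  have hdisj : Disjoint (component G (C ∩ D) '' (C \ D)) (component G (C ∩ D) '' (D \ C)) := by
    refine Set.disjoint_left.2 ?_
    rintro _ ⟨u, hu, rfl⟩ ⟨w, hw, hwu⟩
    have := component_subset_diff_of_sepEdges_eq_empty (Set.union_comm C D ▸ hsep.1)
      (sepEdges_comm G C D ▸ hE) hw
    rw [Set.inter_comm D C, hwu] at this
    exact (this (mem_component_self G _ u)).2 hu.1
  have hsub : component G (C ∩ D) '' (C \ D) ∪ component G (C ∩ D) '' (D \ C) ⊆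
      component G (C ∩ D) '' (C ∩ D)ᶜ := by
    rw [← Set.image_union]
    exact Set.image_mono fun w hw h => hw.elim (fun hw => hw.2 h.2) fun hw => hw.2 h.1
  refine ⟨h3, ?_, ?_⟩
  · rw [sepOrder_eq, hE, Set.ncard_empty] at hord
    exact hord
  · have := Set.ncard_le_ncard hsub
    rw [Set.ncard_union_eq hdisj] at this
    omega

def Attached (G : SimpleGraph V) (K S : Set V) : Prop :=
  ∀ z ∈ S, 2 ≤ (G.neighborSet z ∩ (K ∪ S)).ncard

-- The largest attached subset of `X`; `(K ∪ attachment G X v, Kᶜ)` is the tri-separation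
-- that the paper obtains from the component `K` of `v` by reduction.
def attachment (G : SimpleGraph V) (X : Set V) (v : V) : Set V :=
  ⋃₀ {T | T ⊆ X ∧ Attached G (component G X v) T}

section attachment

variable {G : SimpleGraph V} {X K : Set V} {v : V}

lemma Attached.pair [Finite V] {a b ua ub : V} (hua : ua ∈ K) (haua : G.Adj a ua) (hub : ub ∈ K)
    (hbub : G.Adj b ub) (hab : G.Adj a b) (haK : a ∉ K) (hbK : b ∉ K) :
    Attached G K {a, b} := by
  have key : ∀ {x y u}, u ∈ K → G.Adj x u → G.Adj x y → y ∉ K → y ∈ ({a, b} : Set V) →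
      2 ≤ (G.neighborSet x ∩ (K ∪ {a, b})).ncard := fun hu hxu hxy hyK hy =>
    (Set.one_lt_ncard).2 ⟨_, ⟨hxu, Or.inl hu⟩, _, ⟨hxy, Or.inr hy⟩, fun h => hyK (h ▸ hu)⟩
  rintro z (rfl | rfl)
  · exact key hua haua hab hbK (Or.inr rfl)
  · exact key hub hbub hab.symm haK (Or.inl rfl)

lemma attachment_subset : attachment G X v ⊆ X := by
  rintro x ⟨T, ⟨hT, -⟩, hx⟩
  exact hT hx

lemma attached_attachment [Finite V] : Attached G (component G X v) (attachment G X v) := by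
  rintro z ⟨T, hT, hz⟩
  exact (hT.2 z hz).trans (Set.ncard_le_ncard
    (Set.inter_subset_inter_right _ (Set.union_subset_union_right _ (Set.subset_sUnion_of_mem hT))))

lemma subset_attachment {T : Set V} (hTX : T ⊆ X) (hT : Attached G (component G X v) T) :
    T ⊆ attachment G X v :=
  Set.subset_sUnion_of_mem ⟨hTX, hT⟩

lemma ncard_neighborSet_inter_component_le_one [Finite V] {x : V} (hx : x ∈ X)
    (hxS : x ∉ attachment G X v) : (G.neighborSet x ∩ component G X v).ncard ≤ 1 := by
  by_contra! h
  refine hxS (subset_attachment (Set.singleton_subset_iff.2 hx) ?_ rfl)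
  rintro z rfl
  exact h.trans_le (Set.ncard_le_ncard (Set.inter_subset_inter_right _ Set.subset_union_left))

end attachment

section cycles

variable {G : SimpleGraph V}

lemma HasCycleIn.mono {A B : Set V} (h : HasCycleIn G A) (hAB : A ⊆ B) : HasCycleIn G B := by
  obtain ⟨u, p, hp, hA⟩ := h
  exact ⟨u, p, hp, fun x hx => hAB (hA x hx)⟩

lemma hasCycleIn_of_adj_mem_support {W : Set V} {u w z : V} {p : G.Walk u w} (hp : p.IsPath)
    (hpW : ∀ s ∈ p.support, s ∈ W) (hzu : G.Adj z u) (hz : z ∈ p.support)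
    (hzp : s(u, z) ∉ p.edges) : HasCycleIn G W := by
  classical
  refine ⟨z, Walk.cons hzu (p.takeUntil z hz), ?_, fun s hs => ?_⟩
  · rw [Walk.cons_isCycle_iff, Sym2.eq_swap]
    exact ⟨hp.takeUntil hz, fun h => hzp (p.edges_takeUntil_subset_edges hz h)⟩
  · rw [Walk.support_cons, List.mem_cons] at hs
    rcases hs with rfl | hs
    exacts [hpW s hz, hpW s (p.support_takeUntil_subset_support hz hs)]

lemma hasCycleIn_of_two_le_ncard [Finite V] {W : Set V} {v₀ v₁ : V} (hv₁ : v₁ ∈ W)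
    (hne : v₁ ≠ v₀) (hdeg : ∀ w ∈ W, w ≠ v₀ → 2 ≤ (G.neighborSet w ∩ W).ncard) :
    HasCycleIn G W := by
  have := Fintype.ofFinite V
  by_contra hnc
  suffices ∀ n, ∃ (u w : V) (p : G.Walk u w),
      p.IsPath ∧ (∀ s ∈ p.support, s ∈ W) ∧ u ≠ v₀ ∧ p.length = n by
    obtain ⟨u, w, p, hp, -, -, hlen⟩ := this (Fintype.card V)
    exact hp.length_lt.ne hlen
  intro n
  induction n with
  | zero => exact ⟨v₁, v₁, Walk.nil, by simp [hv₁, hne]⟩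
  | succ n ih =>
    obtain ⟨u, w, p, hp, hpW, hu, rfl⟩ := ih
    obtain ⟨z₁, hz₁, z₂, hz₂, hz⟩ :=
      (Set.one_lt_ncard).1 (hdeg u (hpW u p.start_mem_support) hu)
    obtain ⟨z, ⟨huz, hzW⟩, hzp⟩ : ∃ z ∈ G.neighborSet u ∩ W, s(u, z) ∉ p.edges := by
      by_contra! h
      exact hz ((hp.eq_snd_of_mem_edges (h z₁ hz₁)).trans (hp.eq_snd_of_mem_edges (h z₂ hz₂)).symm)
    by_cases hzs : z ∈ p.support
    · exact absurd (hasCycleIn_of_adj_mem_support hp hpW huz.symm hzs hzp) hnc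
    have hcons : (Walk.cons huz.symm p).IsPath := hp.cons hzs
    have hconsW : ∀ s ∈ (Walk.cons huz.symm p).support, s ∈ W := by
      simpa [hzW] using hpW
    by_cases hzv : z = v₀
    · refine ⟨w, z, (Walk.cons huz.symm p).reverse, hcons.reverse, fun s hs => hconsW s ?_,
        ?_, by simp⟩
      · rwa [Walk.support_reverse, List.mem_reverse] at hs
      rintro rfl
      exact hzs (hzv ▸ p.end_mem_support)
    · exact ⟨z, w, Walk.cons huz.symm p, hcons, hconsW, hzv, by simp⟩

lemma hasCycleIn_insert_of_walk {T : Set V} {c u u' : V} (p : G.Walk u u')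
    (hp : ∀ s ∈ p.support, s ∈ T) (hc : c ∉ T) (hcu : G.Adj c u) (hcu' : G.Adj c u')
    (hne : u ≠ u') : HasCycleIn G (insert c T) := by
  classical
  have hq : ∀ s ∈ p.toPath.val.support, s ∈ T := fun s hs =>
    hp s (p.support_toPath_subset_support hs)
  refine ⟨u', Walk.cons hcu'.symm (Walk.cons hcu p.toPath), ?_, fun s hs => ?_⟩
  · rw [Walk.cons_isCycle_iff, Walk.cons_isPath_iff, Walk.edges_cons, List.mem_cons, not_or]
    refine ⟨⟨p.toPath.2, fun h => hc (hq c h)⟩, fun h => ?_,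
      fun h => hc (hq c (p.toPath.val.snd_mem_support_of_mem_edges h))⟩
    rcases Sym2.eq_iff.1 h with ⟨-, h⟩ | ⟨h, -⟩
    exacts [hc (h ▸ hp u p.start_mem_support), hne h.symm]
  · simp only [Walk.support_cons, List.mem_cons] at hs
    rcases hs with rfl | rfl | hs
    exacts [Or.inr (hp s p.end_mem_support), Or.inl rfl, Or.inr (hq s hs)]

end cycles

lemma hasCycleIn_union_attachment_of_ncard_eq_one [Finite V] {G : SimpleGraph V} {X : Set V}
    {v : V} (hv : v ∉ X) (hS : (attachment G X v).ncard = 1) :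
    HasCycleIn G (component G X v ∪ attachment G X v) := by
  set K := component G X v
  obtain ⟨c, hc⟩ := Set.ncard_eq_one.1 hS
  have hcK : c ∉ K := fun h =>
    notMem_of_mem_component hv h (attachment_subset (hc ▸ Set.mem_singleton c))
  have h2 := attached_attachment (G := G) (X := X) (v := v) c (hc ▸ Set.mem_singleton c)
  rw [hc, Set.union_singleton] at h2
  obtain ⟨u, ⟨hcu, hu⟩, u', ⟨hcu', hu'⟩, hne⟩ := (Set.one_lt_ncard).1 h2
  rw [Set.mem_insert_iff] at hu hu'
  have hu : u ∈ K := hu.resolve_left fun h => G.loopless.irrefl c (h ▸ hcu)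
  have hu' : u' ∈ K := hu'.resolve_left fun h => G.loopless.irrefl c (h ▸ hcu')
  obtain ⟨p, hp⟩ := (ReachIn.trans (ReachIn.symm hu) hu').exists_walk
  have hpK : ∀ s ∈ p.support, s ∈ K := fun s hs => by
    have : s ∈ component G X u := hp s hs
    rwa [← component_eq_of_mem hu] at this
  rw [hc, Set.union_singleton]
  exact hasCycleIn_insert_of_walk p hpK hcK hcu hcu' hne

namespace FourComponentCut

variable [Finite V] {G : SimpleGraph V} {X A B : Set V} {v : V}

lemma exists_adj_mem_component (hg : FourComponentCut G X) {x : V} (hx : x ∈ X) (hv : v ∉ X) :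
    ∃ u ∈ component G X v, G.Adj x u :=
  hg.kConnected.exists_adj_mem_component hg.ncard_eq.le hx hv

lemma exists_two_other_components (hg : FourComponentCut G X) (v : V) :
    ∃ b₁ b₂, b₁ ∉ X ∧ b₂ ∉ X ∧ component G X b₁ ≠ component G X b₂ ∧
      component G X b₁ ≠ component G X v ∧ component G X b₂ ≠ component G X v := by
  have := Set.ncard_le_ncard_sdiff_add_ncard (component G X '' Xᶜ) {component G X v}
  rw [Set.ncard_singleton] at this
  obtain ⟨_, ⟨⟨b₁, hb₁, rfl⟩, h₁⟩, _, ⟨⟨b₂, hb₂, rfl⟩, h₂⟩, h₁₂⟩ :=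
    (Set.one_lt_ncard (s := component G X '' Xᶜ \ {component G X v})).1
      (by have := hg.four_le; omega)
  exact ⟨b₁, b₂, hb₁, hb₂, h₁₂, h₁, h₂⟩

lemma two_le_ncard_neighborSet_inter_compl (hg : FourComponentCut G X) (v : V) {x : V}
    (hx : x ∈ X) : 2 ≤ (G.neighborSet x ∩ (component G X v)ᶜ).ncard := by
  obtain ⟨b₁, b₂, hb₁, hb₂, h₁₂, h₁, h₂⟩ := hg.exists_two_other_components v
  obtain ⟨u₁, hu₁, hxu₁⟩ := hg.exists_adj_mem_component hx hb₁
  obtain ⟨u₂, hu₂, hxu₂⟩ := hg.exists_adj_mem_component hx hb₂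
  refine (Set.one_lt_ncard).2 ⟨u₁, ⟨hxu₁, fun h => h₁ (component_eq_of_mem_of_mem hu₁ h)⟩,
    u₂, ⟨hxu₂, fun h => h₂ (component_eq_of_mem_of_mem hu₂ h)⟩, ?_⟩
  rintro rfl
  exact h₁₂ (component_eq_of_mem_of_mem hu₁ hu₂)

lemma exists_unitMeets (hg : FourComponentCut G X) (hAB : A ∪ B = Set.univ) {xa xb : V}
    (hxa : xa ∈ X ∩ (A \ B)) (hxb : xb ∈ X ∩ (B \ A)) (hv : v ∉ X) :
    ∃ μ ∈ sepSet G A B, UnitMeets G μ (component G X v) := by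
  by_contra! h
  obtain ⟨u, hu, hxau⟩ := hg.exists_adj_mem_component hxa.1 hv
  obtain ⟨w, hw, hxbw⟩ := hg.exists_adj_mem_component hxb.1 hv
  rcases component_subset_side hAB hv h with hK | hK
  · exact h _ (Or.inr ⟨s(w, xb), ⟨hxbw.symm, w, hK hw, xb, hxb.2, rfl⟩, rfl⟩)
      ⟨hxbw.symm, w, Sym2.mem_mk_left w xb, hw⟩
  · exact h _ (Or.inr ⟨s(xa, u), ⟨hxau, xa, hxa.2, u, hK hu, rfl⟩, rfl⟩)
      ⟨hxau, u, Sym2.mem_mk_right xa u, hu⟩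

lemma subset_or_subset_of_triSep (hg : FourComponentCut G X) (hT : TriSep G A B) :
    X ⊆ A ∨ X ⊆ B := by
  by_contra! h
  obtain ⟨⟨xb, hxb, hxbA⟩, ⟨xa, hxa, hxaB⟩⟩ := And.imp Set.not_subset.1 Set.not_subset.1 h
  have hAB := hT.1.1.1
  have hxaA : xa ∈ A := (hAB ▸ Set.mem_univ xa : xa ∈ A ∪ B).resolve_right hxaB
  have hxbB : xb ∈ B := (hAB ▸ Set.mem_univ xb : xb ∈ A ∪ B).resolve_left hxbA
  have := ncard_le_ncard_of_rel (Set.toFinite (sepSet G A B)) (fun K μ => UnitMeets G μ K)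
    (s := component G X '' Xᶜ) (by
      rintro _ ⟨u, hu, rfl⟩
      exact hg.exists_unitMeets hAB ⟨hxa, hxaA, hxaB⟩ ⟨hxb, hxbB, hxbA⟩ hu)
    (by
      rintro μ - _ ⟨u, hu, rfl⟩ _ ⟨w, hw, rfl⟩ h₁ h₂
      exact component_eq_of_unitMeets hu hw h₁ h₂)
  have := hg.four_le
  have := hT.1.2
  rw [sepOrder] at this
  omega

lemma three_le_ncard_inter_add_ncard_sepEdgesMeeting (hg : FourComponentCut G X)
    (hT : TriSep G A B) (hXA : X ⊆ A) {q : V} (hq : q ∈ B \ A) :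
    3 ≤ (A ∩ B ∩ (X ∪ component G X q)).ncard +
      (sepEdgesMeeting G A B (component G X q)).ncard := by
  set K := component G X q
  have hqX : q ∉ X := fun h => hq.2 (hXA h)
  set Z := A ∩ B ∩ (X ∪ K)
  set W := B \ A ∩ K
  set Y := {y | y ∈ A \ B ∧ ∃ x ∈ W, G.Adj x y}
  have hZY : 3 ≤ (Z ∪ Y).ncard := by
    by_cases hX : X ⊆ Z ∪ Y
    · exact hg.ncard_eq ▸ Set.ncard_le_ncard hX
    obtain ⟨z, hzX, hz⟩ := Set.not_subset.1 hX
    refine hg.kConnected.le_ncard_of_closed (W := W) ⟨hq, mem_component_self G X q⟩ ?_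
      (fun h => h.1.2 (hXA hzX)) hz ?_
    · rintro (h | h)
      exacts [hq.2 h.1.1, hq.2 h.1.1]
    · rintro a ⟨haB, haK⟩ b hab hb
      simp only [Set.mem_union, not_or] at hb
      rcases mem_diff_or_mem_inter_or_mem_diff hT.1.1.1 b with hbA | hbAB | hbB
      · exact absurd ⟨hbA, a, ⟨haB, haK⟩, hab⟩ hb.2
      · by_cases hbX : b ∈ X
        · exact absurd ⟨hbAB, Or.inl hbX⟩ hb.1
        · exact absurd ⟨hbAB, Or.inr (mem_component_of_adj hqX haK hab hbX)⟩ hb.1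
      · exact ⟨hbB, mem_component_of_adj hqX haK hab fun h => hbB.2 (hXA h)⟩
  have hY : Y.ncard ≤ (sepEdgesMeeting G A B K).ncard := by
    refine (ncard_adj_across_le (A := B) (B := A) Set.inter_subset_left).trans
      (Set.ncard_le_ncard ?_)
    rintro e ⟨he, s, hse, hs⟩
    exact ⟨sepEdges_comm G A B ▸ he, s, hse, hs.2⟩
  have := Set.ncard_union_le Z Y
  omega

lemma unitMeets_of_triSep (hg : FourComponentCut G X) (hT : TriSep G A B) (hXA : X ⊆ A)
    {q : V} (hq : q ∈ B \ A) {μ : V ⊕ Sym2 V} (hμ : μ ∈ sepSet G A B)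
    (hμX : μ ∉ Sum.inl '' X) : UnitMeets G μ (component G X q) := by
  have hZ : A ∩ B ∩ (X ∪ component G X q) ⊆ A ∩ B := Set.inter_subset_left
  have hE : sepEdgesMeeting G A B (component G X q) ⊆ sepEdges G A B := fun _ he => he.1
  have := hg.three_le_ncard_inter_add_ncard_sepEdgesMeeting hT hXA hq
  have := Set.ncard_le_ncard hZ
  have := Set.ncard_le_ncard hE
  have hord := hT.1.2
  rw [sepOrder_eq] at hord
  rcases hμ with ⟨t, ht, rfl⟩ | ⟨e, he, rfl⟩
  · rw [← Set.eq_of_subset_of_ncard_le hZ (by omega)] at ht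
    exact ht.2.resolve_left fun h => hμX ⟨t, h, rfl⟩
  · rw [← Set.eq_of_subset_of_ncard_le hE (by omega)] at he
    exact ⟨he.1.1, he.2⟩

lemma diff_subset_component (hg : FourComponentCut G X) (hT : TriSep G A B) (hXA : X ⊆ A)
    (hXB : ¬ X ⊆ B) {q : V} (hq : q ∈ B \ A) : B \ X ⊆ component G X q := by
  obtain ⟨μ, hμ, hμX⟩ : ∃ μ ∈ sepSet G A B, μ ∉ Sum.inl '' X := by
    by_contra! h
    obtain ⟨xb, hxb, hxbB⟩ := Set.not_subset.1 hXB
    have hsub : sepSet G A B ⊆ Sum.inl '' (X \ {xb}) := by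
      intro μ hμ
      obtain ⟨t, ht, rfl⟩ := h μ hμ
      rcases hμ with ⟨t', ht', he⟩ | ⟨e, -, he⟩
      · cases Sum.inl_injective he
        exact ⟨t, ⟨ht, fun h => hxbB (h ▸ ht'.2)⟩, rfl⟩
      · exact absurd he Sum.inr_ne_inl
    have := (Set.ncard_le_ncard hsub).trans (Set.ncard_image_le (Set.toFinite _))
    rw [Set.ncard_sdiff_singleton_of_mem hxb, hg.ncard_eq] at this
    have := hT.1.2
    rw [sepOrder] at this
    omega
  have hmeets := hg.unitMeets_of_triSep hT hXA hq hμ hμX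
  rintro u ⟨huB, huX⟩
  by_cases huA : u ∈ A
  · exact hg.unitMeets_of_triSep hT hXA hq (μ := Sum.inl u) (Or.inl ⟨u, ⟨huA, huB⟩, rfl⟩)
      (by rintro ⟨t, ht, he⟩; exact huX (Sum.inl_injective he ▸ ht))
  · rw [component_eq_of_unitMeets (fun h => hq.2 (hXA h)) huX hmeets
      (hg.unitMeets_of_triSep hT hXA ⟨huB, huA⟩ hμ hμX)]
    exact mem_component_self G X u

lemma ncard_sepEdges_union_attachment (hg : FourComponentCut G X) (hv : v ∉ X) :
    (sepEdges G (component G X v ∪ attachment G X v) (component G X v)ᶜ).ncard =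
      (X \ attachment G X v).ncard := by
  set K := component G X v
  set S := attachment G X v
  have hXK : ∀ x ∈ X, x ∉ K := fun x hx hxK => notMem_of_mem_component hv hxK hx
  have hmem : ∀ e ∈ sepEdges G (K ∪ S) Kᶜ,
      ∃ a ∈ K, ∃ b ∈ X \ S, G.Adj a b ∧ e = s(a, b) := by
    rintro _ ⟨he, a, ⟨-, ha⟩, b, ⟨hbK, hbS⟩, rfl⟩
    rw [Set.notMem_compl_iff] at ha
    have hbX : b ∈ X := by
      by_contra hbX
      exact hbS (Or.inl (mem_component_of_adj hv ha he hbX))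
    exact ⟨a, ha, b, ⟨hbX, fun h => hbS (Or.inr h)⟩, he, rfl⟩
  have endpoint : ∀ {a b x}, a ∈ K → x ∈ X → x ∈ s(a, b) → x = b := fun ha hx hxe =>
    (Sym2.mem_iff.1 hxe).resolve_left fun h => hXK _ hx (h ▸ ha)
  refine le_antisymm (ncard_le_ncard_of_rel (Set.toFinite _) (fun e x => x ∈ e) ?_ ?_)
    (ncard_le_ncard_of_rel (Set.toFinite _) (fun x e => x ∈ e) ?_ ?_)
  · intro e he
    obtain ⟨a, -, b, hb, -, rfl⟩ := hmem e he
    exact ⟨b, hb, Sym2.mem_mk_right a b⟩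
  · intro x hx e₁ he₁ e₂ he₂ hx₁ hx₂
    obtain ⟨a₁, ha₁, b₁, -, hab₁, rfl⟩ := hmem e₁ he₁
    obtain ⟨a₂, ha₂, b₂, -, hab₂, rfl⟩ := hmem e₂ he₂
    obtain rfl := endpoint ha₁ hx.1 hx₁
    obtain rfl := endpoint ha₂ hx.1 hx₂
    rw [(Set.ncard_le_one).1 (ncard_neighborSet_inter_component_le_one hx.1 hx.2)
      a₁ ⟨hab₁.symm, ha₁⟩ a₂ ⟨hab₂.symm, ha₂⟩]
  · intro x hx
    obtain ⟨u, hu, hxu⟩ := hg.exists_adj_mem_component hx.1 hv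
    refine ⟨s(u, x), ⟨hxu.symm, u, ⟨Or.inl hu, fun h => h hu⟩, x, ⟨hXK x hx.1, ?_⟩, rfl⟩,
      Sym2.mem_mk_right u x⟩
    rintro (h | h)
    exacts [hXK x hx.1 h, hx.2 h]
  · intro e he x₁ hx₁ x₂ hx₂ h₁ h₂
    obtain ⟨a, ha, b, -, -, rfl⟩ := hmem e he
    rw [endpoint ha hx₁.1 h₁, endpoint ha hx₂.1 h₂]

lemma triSep_union_attachment (hg : FourComponentCut G X) (hv : v ∉ X) :
    TriSep G (component G X v ∪ attachment G X v) (component G X v)ᶜ := by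
  set K := component G X v
  set S := attachment G X v
  have hSK : ∀ w ∈ S, w ∉ K := fun w hw hwK =>
    notMem_of_mem_component hv hwK (attachment_subset hw)
  have hdiff : (K ∪ S) \ Kᶜ = K := by
    ext w
    simp only [Set.mem_sdiff, Set.mem_union, Set.mem_compl_iff, not_not]
    tauto
  have hinter : (K ∪ S) ∩ Kᶜ = S := by
    ext w
    have := hSK w
    simp only [Set.mem_inter_iff, Set.mem_union, Set.mem_compl_iff] at this ⊢
    tauto
  obtain ⟨b, -, hb, -, -, hbv, -⟩ := hg.exists_two_other_components v
  refine ⟨⟨⟨Set.eq_univ_of_forall fun w => ?_, ⟨v, by rw [hdiff]; exact mem_component_self G X v⟩,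
    ⟨b, fun hbK => hbv (component_eq_of_mem hbK).symm, ?_⟩⟩, ?_⟩, fun z hz => ?_⟩
  · by_cases hw : w ∈ K
    exacts [Or.inl (Or.inl hw), Or.inr hw]
  · rintro (h | h)
    exacts [hbv (component_eq_of_mem h).symm, hb (attachment_subset h)]
  · rw [sepOrder_eq, hinter, hg.ncard_sepEdges_union_attachment hv, add_comm,
      Set.ncard_sdiff_add_ncard_of_subset attachment_subset, hg.ncard_eq]
  · rw [hinter] at hz
    exact ⟨attached_attachment z hz,
      hg.two_le_ncard_neighborSet_inter_compl v (attachment_subset hz)⟩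

lemma mem_attachment_of_mem_inter (hg : FourComponentCut G X) (hv : v ∉ X) (hT : TriSep G A B)
    (hBK : B \ X ⊆ component G X v) {d : V} (hd : d ∈ X) (hdAB : d ∈ A ∩ B) :
    d ∈ attachment G X v := by
  set K := component G X v
  have hXK : ∀ x ∈ X, x ∉ K := fun x hx hxK => notMem_of_mem_component hv hxK hx
  by_contra hdS
  have hsub : G.neighborSet d ∩ B ⊆ (G.neighborSet d ∩ K) ∪ (G.neighborSet d ∩ X) := by
    rintro z ⟨hdz, hzB⟩
    by_cases hzX : z ∈ X
    exacts [Or.inr ⟨hdz, hzX⟩, Or.inl ⟨hdz, hBK ⟨hzB, hzX⟩⟩]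
  obtain ⟨y, hdy, hy⟩ : (G.neighborSet d ∩ X).Nonempty := by
    have := (Set.ncard_le_ncard hsub).trans (Set.ncard_union_le _ _)
    have := (hT.2 d hdAB).2
    have : (G.neighborSet d ∩ K).ncard ≤ 1 := ncard_neighborSet_inter_component_le_one hd hdS
    exact Set.nonempty_of_ncard_ne_zero (by omega)
  obtain ⟨ud, hud, hdud⟩ := hg.exists_adj_mem_component hd hv
  obtain ⟨uy, huy, hyuy⟩ := hg.exists_adj_mem_component hy hv
  exact hdS (subset_attachment (Set.insert_subset hd (Set.singleton_subset_iff.2 hy))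
    (Attached.pair hud hdud huy hyuy hdy (hXK d hd) (hXK y hy)) (Set.mem_insert d {y}))

lemma nested_union_attachment_of_subset (hg : FourComponentCut G X) (hv : v ∉ X) (hT : TriSep G A B)
    (hXA : X ⊆ A) : Nested (component G X v ∪ attachment G X v) (component G X v)ᶜ A B := by
  set K := component G X v
  have hSA : attachment G X v ⊆ A := attachment_subset.trans hXA
  have hAB := hT.1.1.1
  by_cases hXB : X ⊆ B
  · have hord := hT.1.2
    rw [sepOrder_eq] at hord
    have hXle := Set.ncard_le_ncard (Set.subset_inter hXA hXB)
    have := hg.ncard_eq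
    have hX : X = A ∩ B := Set.eq_of_subset_of_ncard_le (Set.subset_inter hXA hXB) (by omega)
    have hE : sepEdges G A B = ∅ := (Set.ncard_eq_zero).1 (by omega)
    have hK := component_subset_side hAB hv (by
      rintro _ (⟨t, ht, rfl⟩ | ⟨e, he, rfl⟩)
      · exact fun htK => notMem_of_mem_component hv htK (hX ▸ ht)
      · exact absurd he (hE ▸ Set.notMem_empty e))
    rcases hK with hK | hK
    · exact Or.inl ⟨Set.union_subset (hK.trans Set.sdiff_subset) hSA,
        fun w hwB hwK => (hK hwK).2 hwB⟩
    · exact Or.inr (Or.inl ⟨Set.union_subset (hK.trans Set.sdiff_subset)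
        (attachment_subset.trans hXB), fun w hwA hwK => (hK hwK).2 hwA⟩)
  obtain ⟨q, hq⟩ := hT.1.1.2.2
  have hBq := hg.diff_subset_component hT hXA hXB hq
  have hB : ∀ w, w ∉ A → w ∈ B := fun w hwA =>
    ((hAB ▸ Set.mem_univ w : w ∈ A ∪ B)).resolve_left hwA
  by_cases hKq : K = component G X q
  · rw [← hKq] at hBq
    refine Or.inr (Or.inr (Or.inl ⟨fun w hwK => ?_, fun d hdB => ?_⟩))
    · by_contra hwA
      exact hwK (hBq ⟨hB w hwA, fun h => hwA (hXA h)⟩)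
    · by_cases hdX : d ∈ X
      · exact Or.inr (hg.mem_attachment_of_mem_inter hv hT hBq hdX ⟨hXA hdX, hdB⟩)
      · exact Or.inl (hBq ⟨hdB, hdX⟩)
  · have hKB : ∀ k ∈ K, k ∉ B := fun k hk hkB =>
      hKq (component_eq_of_mem_of_mem hk (hBq ⟨hkB, notMem_of_mem_component hv hk⟩))
    exact Or.inl ⟨Set.union_subset (fun k hk => by_contra fun hkA => hKB k hk (hB k hkA)) hSA,
      fun w hwB hwK => hKB w hwK hwB⟩

lemma totallyNested_union_attachment (hg : FourComponentCut G X) (hv : v ∉ X) :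
    TotallyNested G (component G X v ∪ attachment G X v) (component G X v)ᶜ := fun _ _ hT =>
  (hg.subset_or_subset_of_triSep hT).elim (hg.nested_union_attachment_of_subset hv hT)
    fun hXB => nested_swap_right (hg.nested_union_attachment_of_subset hv hT.symm hXB)

lemma hasCycleIn_compl_component (hg : FourComponentCut G X) (hv : v ∉ X) :
    HasCycleIn G (component G X v)ᶜ := by
  obtain ⟨b, -, hb, -, -, hbv, -⟩ := hg.exists_two_other_components v
  have hbK : b ∉ component G X v := fun h => hbv (component_eq_of_mem h).symm
  refine hasCycleIn_of_two_le_ncard hbK (fun h => hbK (h ▸ mem_component_self G X v))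
    fun w hwK _ => ?_
  by_cases hwX : w ∈ X
  · exact hg.two_le_ncard_neighborSet_inter_compl v hwX
  · rw [Set.inter_eq_left.2 (show G.neighborSet w ⊆ (component G X v)ᶜ from
      fun _ hwz hzK => hwK (mem_component_of_adj hv hzK (G.adj_symm hwz) hwX))]
    exact (by norm_num : 2 ≤ 3).trans (hg.kConnected.le_ncard_neighborSet w)

lemma hasCycleIn_union_attachment_of_two_le (hg : FourComponentCut G X) (hv : v ∉ X)
    (hS : 2 ≤ (attachment G X v).ncard) :
    HasCycleIn G (component G X v ∪ attachment G X v) := by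
  set K := component G X v
  set S := attachment G X v
  obtain ⟨b, -, hb, -, -, hbv, -⟩ := hg.exists_two_other_components v
  have hbKS : b ∉ K ∪ S := by
    rintro (h | h)
    exacts [hbv (component_eq_of_mem h).symm, hb (attachment_subset h)]
  refine hasCycleIn_of_two_le_ncard (v₀ := b) (Or.inl (mem_component_self G X v))
    (fun h => hbKS (by rw [← h]; exact Or.inl (mem_component_self G X v))) fun w hw _ => ?_
  rcases hw with hwK | hwS
  · have hsub : G.neighborSet w ⊆ G.neighborSet w ∩ (K ∪ S) ∪ X \ S := fun z hwz => by
      rcases neighborSet_subset_component_union hv hwK hwz with hzK | hzX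
      · exact Or.inl ⟨hwz, Or.inl hzK⟩
      · by_cases hzS : z ∈ S
        exacts [Or.inl ⟨hwz, Or.inr hzS⟩, Or.inr ⟨hzX, hzS⟩]
    have := (Set.ncard_le_ncard hsub).trans (Set.ncard_union_le _ _)
    have := hg.kConnected.le_ncard_neighborSet w
    have : (X \ S).ncard + S.ncard = 3 :=
      hg.ncard_eq ▸ Set.ncard_sdiff_add_ncard_of_subset attachment_subset
    omega
  · exact attached_attachment w hwS

-- Two such vertices would have two neighbours each in the three-element set `X`, hence a
-- common one, which would then have two neighbours in `K`.
lemma eq_of_ncard_neighborSet_inter_component_le_one (hg : FourComponentCut G X) (hv : v ∉ X)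
    (hX : ∀ x ∈ X, (G.neighborSet x ∩ component G X v).ncard ≤ 1) {w₁ w₂ : V}
    (hw₁ : w₁ ∈ component G X v) (hw₂ : w₂ ∈ component G X v)
    (h₁ : (G.neighborSet w₁ ∩ component G X v).ncard ≤ 1)
    (h₂ : (G.neighborSet w₂ ∩ component G X v).ncard ≤ 1) : w₁ = w₂ := by
  set K := component G X v
  have hbad : ∀ z ∈ K, (G.neighborSet z ∩ K).ncard ≤ 1 → 2 ≤ (G.neighborSet z ∩ X).ncard := by
    intro z hz hz1
    have hsub : G.neighborSet z ⊆ (G.neighborSet z ∩ K) ∪ (G.neighborSet z ∩ X) := fun y hzy =>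
      (neighborSet_subset_component_union hv hz hzy).imp (⟨hzy, ·⟩) (⟨hzy, ·⟩)
    have := (Set.ncard_le_ncard hsub).trans (Set.ncard_union_le _ _)
    have := hg.kConnected.le_ncard_neighborSet z
    omega
  by_contra hne
  obtain ⟨x, ⟨hw₁x, hx⟩, hw₂x, -⟩ :
      ((G.neighborSet w₁ ∩ X) ∩ (G.neighborSet w₂ ∩ X)).Nonempty := by
    have := Set.ncard_union_add_ncard_inter (G.neighborSet w₁ ∩ X) (G.neighborSet w₂ ∩ X)
    have : (G.neighborSet w₁ ∩ X ∪ G.neighborSet w₂ ∩ X).ncard ≤ X.ncard :=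
      Set.ncard_le_ncard (Set.union_subset Set.inter_subset_right Set.inter_subset_right)
    have := hbad w₁ hw₁ h₁
    have := hbad w₂ hw₂ h₂
    have := hg.ncard_eq
    exact Set.nonempty_of_ncard_ne_zero (by omega)
  have : 1 < (G.neighborSet x ∩ K).ncard :=
    (Set.one_lt_ncard).2 ⟨w₁, ⟨G.adj_symm hw₁x, hw₁⟩, w₂, ⟨G.adj_symm hw₂x, hw₂⟩, hne⟩
  have := hX x hx
  omega

lemma hasCycleIn_component (hg : FourComponentCut G X) (hv : v ∉ X)
    (hX : ∀ x ∈ X, (G.neighborSet x ∩ component G X v).ncard ≤ 1) {w : V}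
    (hw : w ∈ component G X v) (hwv : w ≠ v) : HasCycleIn G (component G X v) := by
  obtain ⟨v₀, hv₀⟩ : ∃ v₀, ∀ z ∈ component G X v, z ≠ v₀ →
      2 ≤ (G.neighborSet z ∩ component G X v).ncard := by
    by_cases h : ∃ w₀ ∈ component G X v, (G.neighborSet w₀ ∩ component G X v).ncard ≤ 1
    · obtain ⟨w₀, hw₀, h₀⟩ := h
      refine ⟨w₀, fun z hz hzw => ?_⟩
      by_contra! hz1
      exact hzw (hg.eq_of_ncard_neighborSet_inter_component_le_one hv hX hz hw₀ (by omega) h₀)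
    · push Not at h
      exact ⟨v, fun z hz _ => h z hz⟩
  by_cases hvv₀ : v = v₀
  · exact hasCycleIn_of_two_le_ncard hw (hvv₀ ▸ hwv) hv₀
  · exact hasCycleIn_of_two_le_ncard (mem_component_self G X v) hvv₀ hv₀

lemma not_hasCycleIn_union_attachment (hg : FourComponentCut G X)
    (hno : ¬ ∃ A B : Set V, TriSep G A B ∧ NontrivialSep G A B ∧ TotallyNested G A B)
    (hv : v ∉ X) : ¬ HasCycleIn G (component G X v ∪ attachment G X v) := fun hA =>
  hno ⟨_, _, hg.triSep_union_attachment hv, ⟨hA, hg.hasCycleIn_compl_component hv⟩,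
    hg.totallyNested_union_attachment hv⟩

lemma attachment_eq_empty (hg : FourComponentCut G X)
    (hno : ¬ ∃ A B : Set V, TriSep G A B ∧ NontrivialSep G A B ∧ TotallyNested G A B)
    (hv : v ∉ X) : attachment G X v = ∅ := by
  have hA := hg.not_hasCycleIn_union_attachment hno hv
  by_contra hne
  have := (Set.ncard_pos).2 (Set.nonempty_iff_ne_empty.2 hne)
  rcases Nat.lt_or_ge (attachment G X v).ncard 2 with h | h
  · exact hA (hasCycleIn_union_attachment_of_ncard_eq_one hv (by omega))
  · exact hA (hg.hasCycleIn_union_attachment_of_two_le hv h)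

lemma component_eq_singleton (hg : FourComponentCut G X)
    (hno : ¬ ∃ A B : Set V, TriSep G A B ∧ NontrivialSep G A B ∧ TotallyNested G A B)
    (hv : v ∉ X) : component G X v = {v} := by
  refine Set.eq_singleton_iff_unique_mem.2 ⟨mem_component_self G X v, fun w hw => ?_⟩
  by_contra hwv
  have hX : ∀ x ∈ X, (G.neighborSet x ∩ component G X v).ncard ≤ 1 := fun x hx =>
    ncard_neighborSet_inter_component_le_one hx
      (hg.attachment_eq_empty hno hv ▸ Set.notMem_empty x)
  exact hg.not_hasCycleIn_union_attachment hno hv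
    ((hg.hasCycleIn_component hv hX hw hwv).mono Set.subset_union_left)

lemma not_adj_of_mem (hg : FourComponentCut G X)
    (hno : ¬ ∃ A B : Set V, TriSep G A B ∧ NontrivialSep G A B ∧ TotallyNested G A B)
    {a b : V} (ha : a ∈ X) (hb : b ∈ X) : ¬ G.Adj a b := by
  intro hab
  obtain ⟨_, v, hv, rfl⟩ := Set.nonempty_of_ncard_ne_zero (by have := hg.four_le; omega :
    (component G X '' Xᶜ).ncard ≠ 0)
  have hXK : ∀ x ∈ X, x ∉ component G X v := fun x hx hxK => notMem_of_mem_component hv hxK hx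
  obtain ⟨ua, hua, haua⟩ := hg.exists_adj_mem_component ha hv
  obtain ⟨ub, hub, hbub⟩ := hg.exists_adj_mem_component hb hv
  have := subset_attachment (Set.insert_subset ha (Set.singleton_subset_iff.2 hb))
    (Attached.pair hua haua hub hbub hab (hXK a ha) (hXK b hb)) (Set.mem_insert a {b})
  rw [hg.attachment_eq_empty hno hv] at this
  exact this

lemma adj_iff (hg : FourComponentCut G X)
    (hno : ¬ ∃ A B : Set V, TriSep G A B ∧ NontrivialSep G A B ∧ TotallyNested G A B)
    (u w : V) : G.Adj u w ↔ (u ∈ X ↔ w ∉ X) := by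
  have hN : ∀ v ∉ X, G.neighborSet v = X := fun v hv => by
    refine Set.eq_of_subset_of_ncard_le (fun z hvz => ?_)
      (hg.ncard_eq ▸ hg.kConnected.le_ncard_neighborSet v)
    refine (neighborSet_subset_component_union hv (mem_component_self G X v) hvz).resolve_left ?_
    rw [hg.component_eq_singleton hno hv]
    rintro rfl
    exact G.loopless.irrefl z hvz
  have hadj : ∀ v ∉ X, ∀ z, G.Adj v z ↔ z ∈ X := fun v hv z => by
    rw [← mem_neighborSet, hN v hv]
  by_cases hu : u ∈ X
  · by_cases hw : w ∈ X
    · simpa [hu, hw] using hg.not_adj_of_mem hno hu hw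
    · simpa [hu, hw, G.adj_comm u w] using (hadj w hw u).2 hu
  · simpa [hu] using hadj u hu w

end FourComponentCut

lemma nonempty_iso_completeBipartiteGraph [Finite V] {G : SimpleGraph V} (X : Set V)
    (hadj : ∀ u w, G.Adj u w ↔ (u ∈ X ↔ w ∉ X)) :
    Nonempty (G ≃g completeBipartiteGraph (Fin X.ncard) (Fin Xᶜ.ncard)) := by
  classical
  let e : G ≃g completeBipartiteGraph X ↥Xᶜ :=
    { toEquiv := (Equiv.Set.sumCompl X).symm
      map_rel_iff' := fun {u w} => by
        by_cases hu : u ∈ X <;> by_cases hw : w ∈ X <;>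
          simp [hadj, hu, hw, Equiv.Set.sumCompl_symm_apply_of_mem,
            Equiv.Set.sumCompl_symm_apply_of_notMem] }
  exact ⟨e.trans (completeBipartiteGraphCongr
    (Finite.equivFinOfCardEq (Nat.card_coe_set_eq X))
    (Finite.equivFinOfCardEq (Nat.card_coe_set_eq Xᶜ)))⟩

variable [Fintype V] [DecidableEq V]

/-- If a 3-connected graph has a non-half-connected tri-separation
and no totally-nested nontrivial tri-separation, then it is a `K_{3,m}` with `m ≥ 4`. -/
theorem stmt13 (G : SimpleGraph V) (h3 : KConnected 3 G) (C D : Set V)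
    (hCD : TriSep G C D)
    (h1 : ¬ (G.induce (C \ D)).Connected) (h2 : ¬ (G.induce (D \ C)).Connected)
    (hno : ¬ ∃ A B : Set V, TriSep G A B ∧ NontrivialSep G A B ∧ TotallyNested G A B) :
    ∃ m : ℕ, 4 ≤ m ∧ Nonempty (G ≃g completeBipartiteGraph (Fin 3) (Fin m)) := by
  have hg := FourComponentCut.of_triSep h3 hCD h1 h2
  refine ⟨(C ∩ D)ᶜ.ncard, hg.four_le.trans (Set.ncard_image_le (Set.toFinite _)), ?_⟩
  rw [← hg.ncard_eq]
  exact nonempty_iso_completeBipartiteGraph _ (hg.adj_iff hno)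

end Paper
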